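/- Let u ∈ R^∞_+ be a decreasing sequence that is both α-moderate and β-moderate from n_0 onwards, suppose ‖w_k − w*‖ ≤ u_k for all n_0 ≤ k ≤ n, and assume ‖L^{(θ)}_n‖·1[n ≥ n_0+1] ≤ ε^{(θ)}_{n−1}. Then for n ≥ n_0: ‖θ_n − θ*‖ ≤ C_a [‖θ_{n_0} − θ*‖ + (α_{n_0}/β_{n_0})‖w_{n_0} − w*‖] e^{−q_1 Σ_{j=n_0+1}^{n−1} α_j} + C_b (α_{n−1}/β_{n−1}) u_{n−1} + ε^{(θ)}_{n−1}, where C_a = C_θ max{‖W_1W_2^{-1}‖, 1} and C_b = ‖W_1W_2^{-1}‖(1 + (2e^{q_1/2}/q_1) C_U C_θ), with C_U = ‖X_1‖ + 2(α−β)(1+‖X_1‖) and C_θ the explicit constant from ∏_{k=i}^n ‖I − α_k X_1‖ ≤ C_θ e^{−q_1 Σ_{k=i}^n α_k}. -/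

import Mathlib

/-!
With `x k = θ k - θ*`, `y k = w k - w*` and `A = W₁ W₂⁻¹`, the fixed-point equations turn the
recursion into `x (k+1) = (I - α_k X₁) x k + (α_k/β_k) A (y (k+1) - y k) + α_k (M¹ - A M²)`.
Unrolling it expresses `x n` through the products `∏ (I - α_j X₁)`, of norm at most
`C_θ e^{-q₁ ∑ α_j}`, and the noise sum `L^{(θ)}`. Summing the `y`-increments by parts leaves the
differences of consecutive weights `(α_k/β_k) ∏_{j>k} - (α_{k-1}/β_{k-1}) ∏_{j≥k}`, of norm
`≤ C_U α_k (α_k/β_k) ∏_{j>k}`. The `α`-moderate growth of `u` trades `(α_k/β_k) u_k` for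
`(α_{n-1}/β_{n-1}) u_{n-1}` at the price of half of the exponential decay, and
`∑_k α_k e^{-(q₁/2) ∑_{j>k} α_j} ≤ 2 e^{q₁/2}/q₁`.
-/

open Matrix
open scoped RealInnerProductSpace BigOperators

noncomputable section

abbrev E (d : ℕ) := EuclideanSpace ℝ (Fin d)

variable {d : ℕ}

def app (A : Matrix (Fin d) (Fin d) ℝ) (x : E d) : E d :=
  Matrix.toEuclideanCLM (𝕜 := ℝ) A x

def opNorm (A : Matrix (Fin d) (Fin d) ℝ) : ℝ :=
  ‖Matrix.toEuclideanCLM (𝕜 := ℝ) A‖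

/-- Positive definiteness (not necessarily symmetric). -/
def PosDefNS (A : Matrix (Fin d) (Fin d) ℝ) : Prop :=
  ∀ x : E d, x ≠ 0 → 0 < ⟪x, app A x⟫

def lambdaMin (A : Matrix (Fin d) (Fin d) ℝ) : ℝ :=
  ⨅ x : Metric.sphere (0 : E d) 1, ⟪(x : E d), app A (x : E d)⟫

def steps (a : ℝ) (n : ℕ) : ℝ := ((n : ℝ) + 1) ^ (-a)

/-- The matrix product `∏_{j=a}^{b} (I − c_j X)` (equal to `1` if `b < a`). -/
def Mprod (X : Matrix (Fin d) (Fin d) ℝ) (c : ℕ → ℝ) (a b : ℕ) :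
    Matrix (Fin d) (Fin d) ℝ :=
  ((List.range' a (b + 1 - a)).map fun j => (1 : Matrix (Fin d) (Fin d) ℝ) - c j • X).prod

def AlphaModerateFrom (α β q1 : ℝ) (u : ℕ → ℝ) (k0 : ℕ) : Prop :=
  ∀ k : ℕ, k0 ≤ k →
    u k / u (k + 1) ≤
      (steps α (k + 1) / steps α k) * (steps β k / steps β (k + 1)) *
        Real.exp (q1 / 2 * steps α (k + 1))

def BetaModerateFrom (α β q2 : ℝ) (u : ℕ → ℝ) (k0 : ℕ) : Prop :=
  ∀ k : ℕ, k0 ≤ k →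
    u k / u (k + 1) ≤
      (steps α (k + 1) / steps α k) * (steps β k / steps β (k + 1)) *
        Real.exp (q2 / 2 * steps β (k + 2))

/-- The aggregated noise `L^{(θ)}_{n+1}` (as a function of `n₀` and `n`). -/
def Lth (Γ1 Γ2 W1 W2 : Matrix (Fin d) (Fin d) ℝ) (α : ℝ) (M1 M2 : ℕ → E d)
    (n0 n : ℕ) : E d :=
  ∑ k ∈ Finset.Icc n0 n,
    steps α k • app (Mprod (Γ1 - W1 * W2⁻¹ * Γ2) (steps α) (k + 1) n)
      (M1 (k + 1) - app (W1 * W2⁻¹) (M2 (k + 1)))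

section MatrixAction

@[simp] lemma app_add (A : Matrix (Fin d) (Fin d) ℝ) (x y : E d) :
    app A (x + y) = app A x + app A y := map_add _ _ _

@[simp] lemma app_sub (A : Matrix (Fin d) (Fin d) ℝ) (x y : E d) :
    app A (x - y) = app A x - app A y := map_sub _ _ _

@[simp] lemma app_smul (A : Matrix (Fin d) (Fin d) ℝ) (r : ℝ) (x : E d) :
    app A (r • x) = r • app A x := map_smul _ _ _

lemma app_sum (A : Matrix (Fin d) (Fin d) ℝ) {ι : Type*} (s : Finset ι) (f : ι → E d) :
    app A (∑ i ∈ s, f i) = ∑ i ∈ s, app A (f i) := map_sum _ _ _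

@[simp] lemma sub_app (A B : Matrix (Fin d) (Fin d) ℝ) (x : E d) :
    app (A - B) x = app A x - app B x := by
  simp [app]

@[simp] lemma smul_app (A : Matrix (Fin d) (Fin d) ℝ) (r : ℝ) (x : E d) :
    app (r • A) x = r • app A x := by
  simp [app]

@[simp] lemma one_app (x : E d) : app (1 : Matrix (Fin d) (Fin d) ℝ) x = x := by
  simp [app]

lemma mul_app (A B : Matrix (Fin d) (Fin d) ℝ) (x : E d) : app (A * B) x = app A (app B x) := by
  simp [app]

lemma norm_app_le (A : Matrix (Fin d) (Fin d) ℝ) (x : E d) : ‖app A x‖ ≤ opNorm A * ‖x‖ :=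
  ContinuousLinearMap.le_opNorm _ x

lemma opNorm_nonneg (A : Matrix (Fin d) (Fin d) ℝ) : 0 ≤ opNorm A := norm_nonneg _

lemma opNorm_mul_le (A B : Matrix (Fin d) (Fin d) ℝ) : opNorm (A * B) ≤ opNorm A * opNorm B := by
  simpa [opNorm] using norm_mul_le _ _

lemma opNorm_one (hd : 0 < d) : opNorm (1 : Matrix (Fin d) (Fin d) ℝ) = 1 := by
  have : Nonempty (Fin d) := ⟨⟨0, hd⟩⟩
  simp [opNorm]

end MatrixAction

section Mprod

variable (X : Matrix (Fin d) (Fin d) ℝ) (c : ℕ → ℝ)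

lemma Mprod_of_lt {a b : ℕ} (h : b < a) : Mprod X c a b = 1 := by
  simp [Mprod, show b + 1 - a = 0 by omega]

lemma Mprod_self (a : ℕ) : Mprod X c a a = 1 - c a • X := by
  simp [Mprod]

lemma Mprod_succ_right {a b : ℕ} (h : a ≤ b + 1) :
    Mprod X c a (b + 1) = Mprod X c a b * (1 - c (b + 1) • X) := by
  rw [Mprod, Mprod, show b + 1 + 1 - a = b + 1 - a + 1 by omega, List.range'_1_concat,
    List.map_append, List.prod_append, show a + (b + 1 - a) = b + 1 by omega]
  simp

lemma Mprod_eq_mul_Mprod_succ {a b : ℕ} (h : a ≤ b) :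
    Mprod X c a b = (1 - c a • X) * Mprod X c (a + 1) b := by
  rw [Mprod, Mprod, show b + 1 - a = b + 1 - (a + 1) + 1 by omega, List.range'_succ]
  simp

lemma commute_one_sub_smul_Mprod (s : ℝ) (a b : ℕ) : Commute (1 - s • X) (Mprod X c a b) :=
  Commute.list_prod_right _ _ fun B hB => by
    obtain ⟨j, -, rfl⟩ := List.mem_map.mp hB
    exact (Commute.one_right _).sub_right
      (((Commute.one_left X).sub_left ((Commute.refl X).smul_left s)).smul_right (c j))

lemma one_sub_smul_mul_Mprod {a b : ℕ} (h : a ≤ b + 1) :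
    (1 - c (b + 1) • X) * Mprod X c a b = Mprod X c a (b + 1) := by
  rw [Mprod_succ_right X c h, (commute_one_sub_smul_Mprod X c _ a b).eq]

lemma opNorm_Mprod_le (hd : 0 < d) (a b : ℕ) :
    opNorm (Mprod X c a b) ≤ ∏ k ∈ Finset.Icc a b, opNorm (1 - c k • X) := by
  induction b with
  | zero =>
    rcases Nat.eq_zero_or_pos a with rfl | ha
    · simp [Mprod_self]
    · simp [Mprod_of_lt X c ha, Finset.Icc_eq_empty_of_lt ha, opNorm_one hd]
  | succ b ih =>
    by_cases h : a ≤ b + 1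
    · rw [Mprod_succ_right X c h, Finset.prod_Icc_succ_top h]
      exact (opNorm_mul_le _ _).trans
        (mul_le_mul_of_nonneg_right ih (opNorm_nonneg _))
    · rw [Mprod_of_lt X c (by omega), Finset.Icc_eq_empty (by omega), opNorm_one hd,
        Finset.prod_empty]

lemma eq_Mprod_add_sum_of_step {z f : ℕ → E d}
    (hz : ∀ k, z (k + 1) = app (1 - c k • X) (z k) + f k) {a m : ℕ} (h : a ≤ m) :
    z (m + 1) = app (Mprod X c a m) (z a) +
      ∑ k ∈ Finset.Icc a m, app (Mprod X c (k + 1) m) (f k) := by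
  induction m, h using Nat.le_induction with
  | base => simp [hz a, Mprod_self, Mprod_of_lt X c (Nat.lt_succ_self a)]
  | succ m hm ih =>
    rw [hz (m + 1), ih, Finset.sum_Icc_succ_top (by omega),
      Mprod_of_lt X c (Nat.lt_succ_self (m + 1)), one_app, app_add, app_sum, ← mul_app,
      one_sub_smul_mul_Mprod X c (by omega), add_assoc]
    congr 2
    refine Finset.sum_congr rfl fun k hk => ?_
    rw [← mul_app, one_sub_smul_mul_Mprod X c (by simp at hk; omega)]

end Mprod

lemma sum_Icc_by_parts {V : Type*} [AddCommGroup V] (F : ℕ → ℕ → V) {a m : ℕ} (h : a ≤ m) :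
    ∑ k ∈ Finset.Icc a m, (F k (k + 1) - F k k) =
      F m (m + 1) - F a a - ∑ k ∈ Finset.Icc (a + 1) m, (F k k - F (k - 1) k) := by
  induction m, h using Nat.le_induction with
  | base => simp
  | succ m hm ih =>
    rw [Finset.sum_Icc_succ_top (by omega), ih, Finset.sum_Icc_succ_top (by omega),
      Nat.add_sub_cancel]
    abel

section Scalar

lemma steps_pos (a : ℝ) (n : ℕ) : 0 < steps a n := by
  unfold steps; positivity

lemma steps_le_one {a : ℝ} (ha : 0 ≤ a) (n : ℕ) : steps a n ≤ 1 :=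
  Real.rpow_le_one_of_one_le_of_nonpos (by simp) (by linarith)

lemma tendsto_steps_zero {a : ℝ} (ha : 0 < a) : Filter.Tendsto (steps a) Filter.atTop (nhds 0) :=
  (tendsto_rpow_neg_atTop ha).comp
    (Filter.tendsto_atTop_add_const_right _ 1 tendsto_natCast_atTop_atTop)

lemma steps_div_steps (a b : ℝ) (n : ℕ) : steps a n / steps b n = ((n : ℝ) + 1) ^ (b - a) := by
  rw [steps, steps, ← Real.rpow_sub (by positivity)]
  ring_nf

lemma steps_succ (a : ℝ) (n : ℕ) : steps a (n + 1) = ((n : ℝ) + 1 + 1) ^ (-a) := by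
  simp [steps]

/-- Bernoulli's inequality `(1 + 1/x)^γ ≤ 1 + γ/x`, and `1/x ≤ 2/(x+1) ≤ 2 (x+1)^(-a)`. -/
lemma rpow_neg_sub_rpow_neg_succ_le {x γ a : ℝ} (hx : 1 ≤ x) (hγ0 : 0 ≤ γ) (hγ1 : γ ≤ 1)
    (ha : a ≤ 1) : x ^ (-γ) - (x + 1) ^ (-γ) ≤ 2 * γ * (x + 1) ^ (-a) * (x + 1) ^ (-γ) := by
  have hx0 : 0 < x := by linarith
  have hsplit : x ^ (-γ) = (x + 1) ^ (-γ) * (1 + 1 / x) ^ γ := by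
    rw [show 1 + 1 / x = (x + 1) / x by field_simp, Real.div_rpow (by linarith) hx0.le,
      Real.rpow_neg hx0.le, Real.rpow_neg (by linarith : 0 ≤ x + 1)]
    have : 0 < (x + 1) ^ γ := by positivity
    field_simp
  have hbern : (1 + 1 / x) ^ γ ≤ 1 + γ * (1 / x) :=
    rpow_one_add_le_one_add_mul_self (by linarith [one_div_pos.mpr hx0]) hγ0 hγ1
  have hinv : 1 / x ≤ 2 * (x + 1) ^ (-a) := by
    have h1 : (x + 1) ^ (-1 : ℝ) ≤ (x + 1) ^ (-a) :=
      Real.rpow_le_rpow_of_exponent_le (by linarith) (by linarith)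
    rw [Real.rpow_neg_one] at h1
    calc 1 / x ≤ 2 / (x + 1) := by rw [div_le_div_iff₀ hx0 (by linarith)]; linarith
      _ = 2 * (x + 1)⁻¹ := div_eq_mul_inv _ _
      _ ≤ 2 * (x + 1) ^ (-a) := by linarith
  have hpos : 0 ≤ (x + 1) ^ (-γ) := by positivity
  rw [hsplit]
  nlinarith [mul_le_mul_of_nonneg_left hbern hpos, mul_le_mul_of_nonneg_left hinv
    (mul_nonneg hγ0 hpos)]

lemma steps_div_steps_succ_le {a b : ℝ} (hba : b ≤ a) (n : ℕ) :
    steps a (n + 1) / steps b (n + 1) ≤ steps a n / steps b n := by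
  rw [steps_div_steps, steps_div_steps]
  exact Real.rpow_le_rpow_of_nonpos (by positivity) (by push_cast; linarith) (by linarith)

lemma steps_div_steps_sub_succ_le {a b : ℝ} (hba : b ≤ a) (hab : a - b ≤ 1) (ha : a ≤ 1)
    (n : ℕ) : steps a n / steps b n - steps a (n + 1) / steps b (n + 1) ≤
      2 * (a - b) * steps a (n + 1) * (steps a (n + 1) / steps b (n + 1)) := by
  rw [steps_div_steps, steps_div_steps, steps_succ, show b - a = -(a - b) by ring]
  push_cast
  exact rpow_neg_sub_rpow_neg_succ_le (by simp) (by linarith) hab ha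

lemma mul_exp_neg_le_one_sub_exp_neg {s t : ℝ} (ht : 0 ≤ t) (hts : t ≤ s) :
    t * Real.exp (-s) ≤ 1 - Real.exp (-t) := by
  have h1 : Real.exp (-t) * Real.exp t = 1 := by rw [← Real.exp_add]; simp
  have h2 : t * Real.exp (-s) ≤ t * Real.exp (-t) :=
    mul_le_mul_of_nonneg_left (Real.exp_le_exp.mpr (by linarith)) ht
  nlinarith [mul_le_mul_of_nonneg_left (Real.add_one_le_exp t) (Real.exp_pos (-t)).le]

/-- Each term is at most `(exp s / s) (φ (k + 1) - φ k)` with `φ k = exp (-s ∑_{j=k}^m c j)`. -/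
lemma sum_mul_exp_neg_sum_le {c : ℕ → ℝ} (hc0 : ∀ k, 0 ≤ c k) (hc1 : ∀ k, c k ≤ 1) {s : ℝ}
    (hs : 0 < s) (a m : ℕ) :
    ∑ k ∈ Finset.Icc a m, c k * Real.exp (-s * ∑ j ∈ Finset.Icc (k + 1) m, c j) ≤
      Real.exp s / s := by
  set φ : ℕ → ℝ := fun k => Real.exp (-s * ∑ j ∈ Finset.Icc k m, c j)
  have hterm : ∀ k ∈ Finset.Icc a m,
      c k * Real.exp (-s * ∑ j ∈ Finset.Icc (k + 1) m, c j) ≤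
        Real.exp s / s * (φ (k + 1) - φ k) := by
    intro k hk
    change c k * φ (k + 1) ≤ _
    have hsplit : φ k = Real.exp (-(s * c k)) * φ (k + 1) := by
      simp only [φ, ← Real.exp_add, Finset.Icc_add_one_left_eq_Ioc,
        ← Finset.add_sum_Ioc_eq_sum_Icc (Finset.mem_Icc.mp hk).2]
      ring_nf
    have hkey := mul_exp_neg_le_one_sub_exp_neg (mul_nonneg hs.le (hc0 k))
      (mul_le_of_le_one_right hs.le (hc1 k))
    have hφ : 0 ≤ φ (k + 1) := (Real.exp_pos _).le
    rw [hsplit, div_mul_eq_mul_div, le_div_iff₀ hs]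
    have hes : Real.exp s * Real.exp (-s) = 1 := by rw [← Real.exp_add]; simp
    calc c k * φ (k + 1) * s = Real.exp s * φ (k + 1) * (s * c k * Real.exp (-s)) := by
          linear_combination (-(c k * φ (k + 1) * s)) * hes
      _ ≤ Real.exp s * φ (k + 1) * (1 - Real.exp (-(s * c k))) :=
          mul_le_mul_of_nonneg_left hkey (mul_nonneg (Real.exp_pos s).le hφ)
      _ = _ := by ring
  calc _ ≤ ∑ k ∈ Finset.Icc a m, Real.exp s / s * (φ (k + 1) - φ k) := Finset.sum_le_sum hterm
    _ ≤ Real.exp s / s := by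
      rcases lt_or_ge m a with hma | ham
      · simp [Finset.Icc_eq_empty_of_lt hma]; positivity
      rw [← Finset.mul_sum, ← Finset.Ico_add_one_right_eq_Icc, Finset.sum_Ico_sub φ (by omega)]
      have hφm : φ (m + 1) = 1 := by simp [φ]
      have hφa : 0 < φ a := Real.exp_pos _
      rw [hφm]
      exact mul_le_of_le_one_right (by positivity) (by linarith)

end Scalar

section Stepsizes

variable {α β : ℝ}

lemma steps_div_steps_sub_add_le (hβ : 0 ≤ β) (hβα : β ≤ α) (hα : α ≤ 1) {N : ℝ} (hN : 0 ≤ N)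
    (n : ℕ) :
    steps α n / steps β n - steps α (n + 1) / steps β (n + 1) +
        steps α n / steps β n * steps α (n + 1) * N ≤
      steps α (n + 1) * (steps α (n + 1) / steps β (n + 1)) * (N + 2 * (α - β) * (1 + N)) := by
  have hdiff := steps_div_steps_sub_succ_le hβα (by linarith) hα n
  have ha0 := (steps_pos α (n + 1)).le
  have ha1 := steps_le_one (hβ.trans hβα) (n + 1)
  have hr0 := (div_pos (steps_pos α (n + 1)) (steps_pos β (n + 1))).le
  set r := steps α (n + 1) / steps β (n + 1)
  set D := steps α n / steps β n - r
  rw [show steps α n / steps β n = r + D by ring]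
  nlinarith [mul_le_mul_of_nonneg_right hdiff (mul_nonneg ha0 hN),
    mul_nonneg (mul_nonneg (mul_nonneg (sub_nonneg.mpr hβα) hr0) (mul_nonneg ha0 hN))
      (sub_nonneg.mpr ha1)]

variable {q : ℝ} {u : ℕ → ℝ} {n0 : ℕ}

lemma AlphaModerateFrom.steps_div_mul_le_succ (hu : AlphaModerateFrom α β q u n0)
    (hpos : ∀ k, 0 < u k) {m : ℕ} (hm : n0 ≤ m) :
    steps α m / steps β m * u m ≤
      steps α (m + 1) / steps β (m + 1) * u (m + 1) * Real.exp (q / 2 * steps α (m + 1)) := by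
  have h := hu m hm
  rw [div_le_iff₀ (hpos _)] at h
  have := steps_pos α m
  have := steps_pos β m
  have := steps_pos α (m + 1)
  have := steps_pos β (m + 1)
  calc steps α m / steps β m * u m ≤ steps α m / steps β m *
        (steps α (m + 1) / steps α m * (steps β m / steps β (m + 1)) *
          Real.exp (q / 2 * steps α (m + 1)) * u (m + 1)) :=
        mul_le_mul_of_nonneg_left h (by positivity)
    _ = _ := by field_simp

lemma AlphaModerateFrom.steps_div_mul_le (hu : AlphaModerateFrom α β q u n0)
    (hpos : ∀ k, 0 < u k) {k m : ℕ} (hk : n0 ≤ k) (hkm : k ≤ m) :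
    steps α k / steps β k * u k ≤
      steps α m / steps β m * u m * Real.exp (q / 2 * ∑ j ∈ Finset.Icc (k + 1) m, steps α j) := by
  induction m, hkm using Nat.le_induction with
  | base => simp
  | succ m hkm ih =>
    refine ih.trans ?_
    rw [Finset.sum_Icc_succ_top (by omega), mul_add, Real.exp_add, mul_comm (Real.exp _),
      ← mul_assoc]
    exact mul_le_mul_of_nonneg_right (hu.steps_div_mul_le_succ hpos (hk.trans hkm))
      (Real.exp_pos _).le

end Stepsizes

section PosDef

lemma PosDefNS.isUnit_det {A : Matrix (Fin d) (Fin d) ℝ} (hA : PosDefNS A) : IsUnit A.det := by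
  rw [isUnit_iff_ne_zero]
  intro h0
  obtain ⟨v, hv, hAv⟩ := Matrix.exists_mulVec_eq_zero_iff.mpr h0
  have hx : WithLp.toLp 2 v ≠ (0 : E d) := by simpa using hv
  have := hA _ hx
  simp [app, Matrix.toEuclideanCLM_toLp, hAv] at this

lemma inner_app_transpose (A : Matrix (Fin d) (Fin d) ℝ) (x : E d) :
    ⟪x, app Aᵀ x⟫ = ⟪x, app A x⟫ := by
  rw [← Matrix.conjTranspose_eq_transpose_of_trivial, ← Matrix.star_eq_conjTranspose, app,
    app, map_star, ContinuousLinearMap.star_eq_adjoint, ContinuousLinearMap.adjoint_inner_right,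
    real_inner_comm]

/-- The infimum defining `lambdaMin` is attained, the unit sphere being compact and nonempty. -/
lemma PosDefNS.lambdaMin_add_transpose_pos (hd : 0 < d) {A : Matrix (Fin d) (Fin d) ℝ}
    (hA : PosDefNS A) : 0 < lambdaMin (A + Aᵀ) := by
  have : Nonempty (Fin d) := ⟨⟨0, hd⟩⟩
  obtain ⟨x, hx⟩ := (NormedSpace.sphere_nonempty (E := E d) (x := 0) (r := 1)).mpr zero_le_one
  have : Nonempty (Metric.sphere (0 : E d) 1) := ⟨⟨x, hx⟩⟩
  have hcont : Continuous fun y : E d => ⟪y, app (A + Aᵀ) y⟫ :=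
    continuous_id.inner (Matrix.toEuclideanCLM (𝕜 := ℝ) (A + Aᵀ)).continuous
  obtain ⟨y, hy, hmin⟩ := (isCompact_sphere (0 : E d) 1).exists_isMinOn ⟨x, hx⟩
    hcont.continuousOn
  have hy0 : y ≠ 0 := ne_zero_of_mem_unit_sphere ⟨y, hy⟩
  have hpos : 0 < ⟪y, app (A + Aᵀ) y⟫ := by
    rw [show app (A + Aᵀ) y = app A y + app Aᵀ y by simp [app], inner_add_right,
      inner_app_transpose]
    linarith [hA y hy0]
  exact hpos.trans_le (le_ciInf fun z => hmin z.2)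

end PosDef

section ProductBound

def MprodDecay (X : Matrix (Fin d) (Fin d) ℝ) (α q C : ℝ) : Prop :=
  ∀ i m, opNorm (Mprod X (steps α) i m) ≤ C * Real.exp (-q * ∑ k ∈ Finset.Icc i m, steps α k)

variable {X : Matrix (Fin d) (Fin d) ℝ} {α q C : ℝ}

/-- Let `k → ∞`: the left side tends to `‖1‖ = 1` and the right side to `C`. -/
lemma one_le_of_opNorm_one_sub_steps_smul_le (hd : 0 < d) (hα : 0 < α)
    (h : ∀ k, opNorm (1 - steps α k • X) ≤ C * Real.exp (-q * steps α k)) : 1 ≤ C := by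
  have hs := tendsto_steps_zero hα
  have hlhs : Filter.Tendsto (fun k => opNorm (1 - steps α k • X)) Filter.atTop (nhds 1) := by
    have hc : Continuous fun s : ℝ =>
        ‖(1 : E d →L[ℝ] E d) - s • Matrix.toEuclideanCLM (𝕜 := ℝ) X‖ := by
      fun_prop
    have h0 := (hc.tendsto 0).comp hs
    rw [zero_smul ℝ (Matrix.toEuclideanCLM (𝕜 := ℝ) X), sub_zero] at h0
    have h1 : ‖(1 : E d →L[ℝ] E d)‖ = 1 := by simpa [opNorm] using opNorm_one hd
    rw [h1] at h0
    refine h0.congr fun k => ?_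
    simp [opNorm]
  have hrhs : Filter.Tendsto (fun k => C * Real.exp (-q * steps α k)) Filter.atTop (nhds C) := by
    simpa using (((hs.const_mul (-q)).rexp).const_mul C)
  exact le_of_tendsto_of_tendsto' hlhs hrhs h

lemma mprodDecay_of_prod_opNorm_le (hd : 0 < d) (hα : 0 < α)
    (hC : ∀ i n, i ≤ n → ∏ k ∈ Finset.Icc i n, opNorm (1 - steps α k • X) ≤
      C * Real.exp (-q * ∑ k ∈ Finset.Icc i n, steps α k)) :
    MprodDecay X α q C := by
  intro i m
  rcases le_or_gt i m with him | hmi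
  · exact (opNorm_Mprod_le X _ hd i m).trans (hC i m him)
  · have h1 : 1 ≤ C := one_le_of_opNorm_one_sub_steps_smul_le hd hα fun k => by
      simpa using hC k k le_rfl
    simpa [Mprod_of_lt X _ hmi, Finset.Icc_eq_empty_of_lt hmi, opNorm_one hd] using h1

lemma MprodDecay.nonneg (hP : MprodDecay X α q C) : 0 ≤ C :=
  nonneg_of_mul_nonneg_left ((opNorm_nonneg _).trans (hP 0 0)) (Real.exp_pos _)

lemma MprodDecay.one_le (hP : MprodDecay X α q C) (hd : 0 < d) : 1 ≤ C := by
  simpa [Mprod_of_lt X _ zero_lt_one, opNorm_one hd] using hP 1 0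

end ProductBound

section Recursion

variable {Γ1 Γ2 W1 W2 A : Matrix (Fin d) (Fin d) ℝ} {v1 v2 θs ws : E d}

lemma fixedPoint_equations (hW2 : IsUnit W2.det) (hX : IsUnit (Γ1 - W1 * W2⁻¹ * Γ2).det)
    (hθs : θs = app (Γ1 - W1 * W2⁻¹ * Γ2)⁻¹ (v1 - app (W1 * W2⁻¹) v2))
    (hws : ws = app W2⁻¹ (v2 - app Γ2 θs)) :
    v1 = app Γ1 θs + app W1 ws ∧ v2 = app Γ2 θs + app W2 ws := by
  have hv2 : v2 = app Γ2 θs + app W2 ws := by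
    rw [hws, ← mul_app, Matrix.mul_nonsing_inv _ hW2, one_app, add_sub_cancel]
  refine ⟨?_, hv2⟩
  have hX : app (Γ1 - W1 * W2⁻¹ * Γ2) θs = v1 - app (W1 * W2⁻¹) v2 := by
    rw [hθs, ← mul_app, Matrix.mul_nonsing_inv _ hX, one_app]
  rw [hv2, sub_app, app_add, mul_app (W1 * W2⁻¹) Γ2, ← mul_app (W1 * W2⁻¹) W2,
    Matrix.nonsing_inv_mul_cancel_right W2 W1 hW2] at hX
  linear_combination (norm := abel) -hX

lemma sub_fixedPoint_succ {α β : ℝ} {θ w M1 M2 : ℕ → E d} (hA : A * W2 = W1)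
    (hv1 : v1 = app Γ1 θs + app W1 ws) (hv2 : v2 = app Γ2 θs + app W2 ws)
    (hθ : ∀ n, θ (n + 1) = θ n + steps α n • (v1 - app Γ1 (θ n) - app W1 (w n) + M1 (n + 1)))
    (hw : ∀ n, w (n + 1) = w n + steps β n • (v2 - app Γ2 (θ n) - app W2 (w n) + M2 (n + 1)))
    (k : ℕ) :
    θ (k + 1) - θs = app (1 - steps α k • (Γ1 - A * Γ2)) (θ k - θs) +
      (steps α k / steps β k) • app A ((w (k + 1) - ws) - (w k - ws)) +
      steps α k • (M1 (k + 1) - app A (M2 (k + 1))) := by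
  have hb := (steps_pos β k).ne'
  have hAw : app A (w (k + 1) - w k) =
      steps β k • (app A v2 - app A (app Γ2 (θ k)) - app W1 (w k) + app A (M2 (k + 1))) := by
    rw [hw k, add_sub_cancel_left, ← hA]
    simp [mul_app]
  rw [sub_sub_sub_cancel_right, hAw, smul_smul, div_mul_cancel₀ _ hb, hθ k, hv1, hv2, ← hA]
  simp only [mul_app, app_add, app_sub, sub_app, smul_app, one_app]
  module

end Recursion

section ErrorBound

variable {X A : Matrix (Fin d) (Fin d) ℝ} {α β q C : ℝ} {x y ξ : ℕ → E d} {u : ℕ → ℝ}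
  {n0 m : ℕ}

/-- Unrolling the recursion, then summing the `y`-increments by parts. -/
lemma eq_Mprod_add_sum_by_parts_of_step
    (hstep : ∀ k, x (k + 1) = app (1 - steps α k • X) (x k) +
      (steps α k / steps β k) • app A (y (k + 1) - y k) + steps α k • ξ k)
    (h : n0 ≤ m) :
    x (m + 1) = app (Mprod X (steps α) n0 m) (x n0) +
      ((steps α m / steps β m) • app A (y (m + 1)) -
        (steps α n0 / steps β n0) • app (Mprod X (steps α) (n0 + 1) m) (app A (y n0)) -
        ∑ k ∈ Finset.Icc (n0 + 1) m,
          ((steps α k / steps β k) • app (Mprod X (steps α) (k + 1) m) (app A (y k)) -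
            (steps α (k - 1) / steps β (k - 1)) • app (Mprod X (steps α) k m) (app A (y k)))) +
      ∑ k ∈ Finset.Icc n0 m, steps α k • app (Mprod X (steps α) (k + 1) m) (ξ k) := by
  rw [eq_Mprod_add_sum_of_step X (steps α) (fun k => (hstep k).trans (add_assoc _ _ _)) h]
  simp only [app_add, app_smul, app_sub, smul_sub, Finset.sum_add_distrib, add_assoc]
  congr 2
  rw [sum_Icc_by_parts (fun k j => (steps α k / steps β k) •
    app (Mprod X (steps α) (k + 1) m) (app A (y j))) h, Mprod_of_lt X _ (Nat.lt_succ_self m),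
    one_app]
  congr 1
  refine Finset.sum_congr rfl fun k hk => ?_
  rw [Nat.sub_add_cancel (by simp at hk; omega)]

lemma norm_steps_div_smul_Mprod_sub_le (hβ : 0 ≤ β) (hβα : β ≤ α) (hα : α ≤ 1) {j m : ℕ}
    (hjm : j + 1 ≤ m) (v : E d) :
    ‖(steps α (j + 1) / steps β (j + 1)) • app (Mprod X (steps α) (j + 1 + 1) m) v -
        (steps α j / steps β j) • app (Mprod X (steps α) (j + 1) m) v‖ ≤
      steps α (j + 1) * (steps α (j + 1) / steps β (j + 1)) *
        (opNorm X + 2 * (α - β) * (1 + opNorm X)) * ‖app (Mprod X (steps α) (j + 1 + 1) m) v‖ := by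
  set z := app (Mprod X (steps α) (j + 1 + 1) m) v
  set r := steps α j / steps β j
  set r' := steps α (j + 1) / steps β (j + 1)
  have hr : 0 ≤ r := (div_pos (steps_pos α j) (steps_pos β j)).le
  have hsplit : r' • z - r • app (Mprod X (steps α) (j + 1) m) v =
      (r' - r) • z + (r * steps α (j + 1)) • app X z := by
    rw [Mprod_eq_mul_Mprod_succ X _ hjm, mul_app, sub_app, one_app, smul_app]
    module
  have hXz : ‖app X z‖ ≤ opNorm X * ‖z‖ := norm_app_le X z
  rw [hsplit]
  calc ‖(r' - r) • z + (r * steps α (j + 1)) • app X z‖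
      ≤ (r - r') * ‖z‖ + r * steps α (j + 1) * (opNorm X * ‖z‖) := by
        refine (norm_add_le _ _).trans ?_
        rw [norm_smul, norm_smul, Real.norm_eq_abs, Real.norm_eq_abs, abs_sub_comm,
          abs_of_nonneg (sub_nonneg.mpr (steps_div_steps_succ_le hβα j)),
          abs_of_nonneg (mul_nonneg hr (steps_pos α _).le)]
        gcongr
        exact mul_nonneg hr (steps_pos α _).le
    _ = (r - r' + r * steps α (j + 1) * opNorm X) * ‖z‖ := by ring
    _ ≤ _ := mul_le_mul_of_nonneg_right
        (steps_div_steps_sub_add_le hβ hβα hα (opNorm_nonneg X) j) (norm_nonneg z)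

/-- The moderate growth of `u` absorbs half of the exponential decay of the products. -/
lemma norm_by_parts_term_le
    (hP : MprodDecay X α q C)
    (hβ : 0 ≤ β) (hβα : β ≤ α) (hα : α ≤ 1) (hu : AlphaModerateFrom α β q u n0)
    (hpos : ∀ k, 0 < u k) (hy : ∀ k, n0 ≤ k → k ≤ m → ‖y k‖ ≤ u k) {k : ℕ} (hk : n0 + 1 ≤ k)
    (hkm : k ≤ m) :
    ‖(steps α k / steps β k) • app (Mprod X (steps α) (k + 1) m) (app A (y k)) -
        (steps α (k - 1) / steps β (k - 1)) • app (Mprod X (steps α) k m) (app A (y k))‖ ≤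
      (opNorm X + 2 * (α - β) * (1 + opNorm X)) * opNorm A * C *
        (steps α m / steps β m * u m) *
        (steps α k * Real.exp (-(q / 2) * ∑ j ∈ Finset.Icc (k + 1) m, steps α j)) := by
  obtain ⟨j, rfl⟩ : ∃ j, k = j + 1 := ⟨k - 1, by omega⟩
  rw [Nat.add_sub_cancel]
  set S := ∑ i ∈ Finset.Icc (j + 1 + 1) m, steps α i
  set CU := opNorm X + 2 * (α - β) * (1 + opNorm X)
  have hCU : 0 ≤ CU := by have := opNorm_nonneg X; nlinarith
  have hC := hP.nonneg
  have hz : ‖app (Mprod X (steps α) (j + 1 + 1) m) (app A (y (j + 1)))‖ ≤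
      C * Real.exp (-q * S) * (opNorm A * u (j + 1)) :=
    (norm_app_le _ _).trans (mul_le_mul (hP _ _)
      ((norm_app_le _ _).trans (mul_le_mul_of_nonneg_left (hy _ (by omega) hkm)
        (opNorm_nonneg A))) (norm_nonneg _) (by positivity))
  have hmod := hu.steps_div_mul_le hpos (by omega) hkm
  have hexp : Real.exp (-q * S) * Real.exp (q / 2 * S) = Real.exp (-(q / 2) * S) := by
    rw [← Real.exp_add]; ring_nf
  have ha := (steps_pos α (j + 1)).le
  have hr := (div_pos (steps_pos α (j + 1)) (steps_pos β (j + 1))).le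
  calc _ ≤ steps α (j + 1) * (steps α (j + 1) / steps β (j + 1)) * CU *
        ‖app (Mprod X (steps α) (j + 1 + 1) m) (app A (y (j + 1)))‖ :=
        norm_steps_div_smul_Mprod_sub_le hβ hβα hα hkm _
    _ ≤ steps α (j + 1) * (steps α (j + 1) / steps β (j + 1)) * CU *
        (C * Real.exp (-q * S) * (opNorm A * u (j + 1))) := by
        gcongr
    _ = CU * opNorm A * C * steps α (j + 1) * Real.exp (-q * S) *
        (steps α (j + 1) / steps β (j + 1) * u (j + 1)) := by ring
    _ ≤ CU * opNorm A * C * steps α (j + 1) * Real.exp (-q * S) *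
        (steps α m / steps β m * u m * Real.exp (q / 2 * S)) := by
        gcongr
        exact mul_nonneg (mul_nonneg (mul_nonneg (mul_nonneg hCU (opNorm_nonneg A)) hC) ha)
          (Real.exp_pos _).le
    _ = _ := by rw [← hexp]; ring

lemma norm_sum_by_parts_le
    (hP : MprodDecay X α q C)
    (hq : 0 < q) (hβ : 0 ≤ β) (hβα : β ≤ α) (hα : α ≤ 1) (hu : AlphaModerateFrom α β q u n0)
    (hpos : ∀ k, 0 < u k) (hy : ∀ k, n0 ≤ k → k ≤ m → ‖y k‖ ≤ u k) :
    ‖∑ k ∈ Finset.Icc (n0 + 1) m,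
        ((steps α k / steps β k) • app (Mprod X (steps α) (k + 1) m) (app A (y k)) -
          (steps α (k - 1) / steps β (k - 1)) • app (Mprod X (steps α) k m) (app A (y k)))‖ ≤
      (opNorm X + 2 * (α - β) * (1 + opNorm X)) * opNorm A * C *
        (steps α m / steps β m * u m) * (2 * Real.exp (q / 2) / q) := by
  have hK : 0 ≤ (opNorm X + 2 * (α - β) * (1 + opNorm X)) * opNorm A * C *
      (steps α m / steps β m * u m) := by
    have hX := opNorm_nonneg X
    have hγ : 0 ≤ α - β := sub_nonneg.mpr hβα
    exact mul_nonneg (mul_nonneg (mul_nonneg (by positivity) (opNorm_nonneg A))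
      (hP.nonneg))
      (mul_nonneg (div_pos (steps_pos α m) (steps_pos β m)).le (hpos m).le)
  refine (norm_sum_le _ _).trans ((Finset.sum_le_sum fun k hk => norm_by_parts_term_le hP hβ hβα hα
    hu hpos hy (Finset.mem_Icc.mp hk).1 (Finset.mem_Icc.mp hk).2).trans ?_)
  rw [← Finset.mul_sum, show 2 * Real.exp (q / 2) / q = Real.exp (q / 2) / (q / 2) by ring]
  exact mul_le_mul_of_nonneg_left (sum_mul_exp_neg_sum_le (fun k => (steps_pos α k).le)
    (steps_le_one (hβ.trans hβα)) (half_pos hq) _ _) hK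

lemma norm_succ_le_of_step
    (hstep : ∀ k, x (k + 1) = app (1 - steps α k • X) (x k) +
      (steps α k / steps β k) • app A (y (k + 1) - y k) + steps α k • ξ k)
    (hP : MprodDecay X α q C)
    (hq : 0 < q) (hβ : 0 ≤ β) (hβα : β ≤ α) (hα : α ≤ 1) (hu : AlphaModerateFrom α β q u n0)
    (hpos : ∀ k, 0 < u k) (hudec : ∀ k, u (k + 1) ≤ u k)
    (hy : ∀ k, n0 ≤ k → k ≤ m + 1 → ‖y k‖ ≤ u k) (h : n0 ≤ m) :
    ‖x (m + 1)‖ ≤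
      C * max (opNorm A) 1 * ((‖x n0‖ + steps α n0 / steps β n0 * ‖y n0‖) *
          Real.exp (-q * ∑ j ∈ Finset.Icc (n0 + 1) m, steps α j)) +
        opNorm A * (1 + 2 * Real.exp (q / 2) / q * (opNorm X + 2 * (α - β) * (1 + opNorm X)) * C) *
          (steps α m / steps β m) * u m +
        ‖∑ k ∈ Finset.Icc n0 m, steps α k • app (Mprod X (steps α) (k + 1) m) (ξ k)‖ := by
  set D := Real.exp (-q * ∑ j ∈ Finset.Icc (n0 + 1) m, steps α j)
  have hρ : ∀ k, 0 ≤ steps α k / steps β k := fun k => (div_pos (steps_pos α k) (steps_pos β k)).le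
  have hC := hP.nonneg
  have hD : 0 ≤ D := (Real.exp_pos _).le
  have hx0 : ‖app (Mprod X (steps α) n0 m) (x n0)‖ ≤ C * D * ‖x n0‖ := by
    refine (norm_app_le _ _).trans (mul_le_mul_of_nonneg_right ((hP _ _).trans ?_) (norm_nonneg _))
    have hsum : ∑ j ∈ Finset.Icc (n0 + 1) m, steps α j ≤ ∑ j ∈ Finset.Icc n0 m, steps α j :=
      Finset.sum_le_sum_of_subset_of_nonneg (Finset.Icc_subset_Icc_left (by omega))
        fun i _ _ => (steps_pos α i).le
    exact mul_le_mul_of_nonneg_left (Real.exp_le_exp.mpr (by nlinarith)) hC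
  have hy0 : ‖(steps α n0 / steps β n0) • app (Mprod X (steps α) (n0 + 1) m) (app A (y n0))‖ ≤
      C * D * (opNorm A * ((steps α n0 / steps β n0) * ‖y n0‖)) := by
    rw [norm_smul, Real.norm_of_nonneg (hρ n0)]
    have := (norm_app_le _ _).trans (mul_le_mul (hP (n0 + 1) m) (norm_app_le A (y n0))
      (norm_nonneg _) (mul_nonneg hC hD))
    nlinarith [hρ n0]
  have hym : ‖(steps α m / steps β m) • app A (y (m + 1))‖ ≤
      opNorm A * (steps α m / steps β m) * u m := by
    rw [norm_smul, Real.norm_of_nonneg (hρ m), mul_comm (opNorm A), mul_assoc]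
    exact mul_le_mul_of_nonneg_left ((norm_app_le _ _).trans (mul_le_mul_of_nonneg_left
      ((hy _ (by omega) le_rfl).trans (hudec m)) (opNorm_nonneg A))) (hρ m)
  have hinit : C * D * ‖x n0‖ + C * D * (opNorm A * ((steps α n0 / steps β n0) * ‖y n0‖)) ≤
      C * max (opNorm A) 1 * ((‖x n0‖ + (steps α n0 / steps β n0) * ‖y n0‖) * D) := by
    have h1 : ‖x n0‖ ≤ max (opNorm A) 1 * ‖x n0‖ :=
      le_mul_of_one_le_left (norm_nonneg _) (le_max_right _ _)
    have h2 : opNorm A * ((steps α n0 / steps β n0) * ‖y n0‖) ≤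
        max (opNorm A) 1 * ((steps α n0 / steps β n0) * ‖y n0‖) :=
      mul_le_mul_of_nonneg_right (le_max_left _ _) (mul_nonneg (hρ n0) (norm_nonneg _))
    have := mul_le_mul_of_nonneg_left (add_le_add h1 h2) (mul_nonneg hC hD)
    linarith
  have hbyparts := norm_sum_by_parts_le (A := A) (m := m) hP hq hβ hβα hα hu hpos
    (fun k hk hkm => hy k hk (by omega))
  rw [eq_Mprod_add_sum_by_parts_of_step hstep h]
  refine ((norm_add_le _ _).trans (add_le_add ((norm_add_le _ _).trans (add_le_add le_rfl
    ((norm_sub_le _ _).trans (add_le_add (norm_sub_le _ _) le_rfl)))) le_rfl)).trans ?_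
  linarith

lemma norm_le_of_step (hd : 0 < d)
    (hstep : ∀ k, x (k + 1) = app (1 - steps α k • X) (x k) +
      (steps α k / steps β k) • app A (y (k + 1) - y k) + steps α k • ξ k)
    (hP : MprodDecay X α q C)
    (hq : 0 < q) (hβ : 0 ≤ β) (hβα : β ≤ α) (hα : α ≤ 1) (hu : AlphaModerateFrom α β q u n0)
    (hpos : ∀ k, 0 < u k) (hudec : ∀ k, u (k + 1) ≤ u k) {n : ℕ} (hn : n0 ≤ n)
    (hy : ∀ k, n0 ≤ k → k ≤ n → ‖y k‖ ≤ u k) {ε : ℝ} (hε : 0 ≤ ε)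
    (hξ : n0 + 1 ≤ n →
      ‖∑ k ∈ Finset.Icc n0 (n - 1), steps α k • app (Mprod X (steps α) (k + 1) (n - 1)) (ξ k)‖ ≤
        ε) :
    ‖x n‖ ≤
      C * max (opNorm A) 1 * ((‖x n0‖ + steps α n0 / steps β n0 * ‖y n0‖) *
          Real.exp (-q * ∑ j ∈ Finset.Icc (n0 + 1) (n - 1), steps α j)) +
        opNorm A * (1 + 2 * Real.exp (q / 2) / q * (opNorm X + 2 * (α - β) * (1 + opNorm X)) * C) *
          (steps α (n - 1) / steps β (n - 1)) * u (n - 1) + ε := by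
  have hC1 := hP.one_le hd
  have hρ : ∀ k, 0 ≤ steps α k / steps β k := fun k => (div_pos (steps_pos α k) (steps_pos β k)).le
  have hK : 0 ≤ opNorm A * (1 + 2 * Real.exp (q / 2) / q *
      (opNorm X + 2 * (α - β) * (1 + opNorm X)) * C) * (steps α (n - 1) / steps β (n - 1)) *
        u (n - 1) := by
    have := opNorm_nonneg X
    have := sub_nonneg.mpr hβα
    have := hρ (n - 1)
    have := hpos (n - 1)
    have := opNorm_nonneg A
    positivity
  rcases hn.eq_or_lt with rfl | hlt
  · have hK : 1 ≤ C * max (opNorm A) 1 := one_le_mul_of_one_le_of_one_le hC1 (le_max_right _ _)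
    have hy0 := mul_nonneg (hρ n0) (norm_nonneg (y n0))
    simp only [Finset.Icc_eq_empty_of_lt (show n0 - 1 < n0 + 1 by omega), Finset.sum_empty,
      mul_zero, Real.exp_zero, mul_one]
    nlinarith [norm_nonneg (x n0)]
  · obtain ⟨m, rfl⟩ : ∃ m, n = m + 1 := ⟨n - 1, by omega⟩
    rw [Nat.add_sub_cancel] at hξ ⊢
    linarith [norm_succ_le_of_step hstep hP hq hβ hβα hα hu hpos hudec hy (by omega), hξ (by omega)]

end ErrorBound

theorem stmt17_general {d : ℕ} (hd : 0 < d)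
    (v1 v2 : E d) (Γ1 Γ2 W1 W2 : Matrix (Fin d) (Fin d) ℝ)
    (hW2 : PosDefNS W2) (hX1 : PosDefNS (Γ1 - W1 * W2⁻¹ * Γ2))
    (α β p δ : ℝ) (hβ : 0 < β) (hβα : β < α) (hα : α < 1)
    (Lθc Caθ : ℝ)
    (q1 : ℝ)
    (hq1 : q1 = lambdaMin ((Γ1 - W1 * W2⁻¹ * Γ2) + (Γ1 - W1 * W2⁻¹ * Γ2)ᵀ) / 4)
    (Cθ : ℝ)
    (hCθ : ∀ i n : ℕ, i ≤ n →
      ∏ k ∈ Finset.Icc i n, opNorm (1 - steps α k • (Γ1 - W1 * W2⁻¹ * Γ2)) ≤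
        Cθ * Real.exp (-q1 * ∑ k ∈ Finset.Icc i n, steps α k))
    (θ w M1 M2 : ℕ → E d)
    (hθrec : ∀ n : ℕ, θ (n + 1) =
      θ n + steps α n • (v1 - app Γ1 (θ n) - app W1 (w n) + M1 (n + 1)))
    (hwrec : ∀ n : ℕ, w (n + 1) =
      w n + steps β n • (v2 - app Γ2 (θ n) - app W2 (w n) + M2 (n + 1)))
    (θstar wstar : E d)
    (hθstar : θstar = app (Γ1 - W1 * W2⁻¹ * Γ2)⁻¹ (v1 - app (W1 * W2⁻¹) v2))
    (hwstar : wstar = app W2⁻¹ (v2 - app Γ2 θstar))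
    -- the error threshold `ε^{(θ)}`
    (εθ : ℕ → ℝ)
    (hεθ : ∀ k : ℕ, εθ k = Real.sqrt ((d : ℝ) ^ 3 * Lθc * Caθ) *
      (((k : ℝ) + 1) ^ (-(α / 2)) *
        Real.sqrt (Real.log (4 * (d : ℝ) ^ 2 * ((k : ℝ) + 1) ^ p / δ))))
    (n0 n : ℕ) (hn : n0 ≤ n)
    (u : ℕ → ℝ) (hupos : ∀ k, 0 < u k) (hudec : ∀ k, u (k + 1) ≤ u k)
    (huα : AlphaModerateFrom α β q1 u n0)
    (hw : ∀ k : ℕ, n0 ≤ k → k ≤ n → ‖w k - wstar‖ ≤ u k)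
    (hL : n0 + 1 ≤ n → ‖Lth Γ1 Γ2 W1 W2 α M1 M2 n0 (n - 1)‖ ≤ εθ (n - 1)) :
    ‖θ n - θstar‖ ≤
      Cθ * max (opNorm (W1 * W2⁻¹)) 1 *
          ((‖θ n0 - θstar‖ + steps α n0 / steps β n0 * ‖w n0 - wstar‖) *
            Real.exp (-q1 * ∑ j ∈ Finset.Icc (n0 + 1) (n - 1), steps α j)) +
        opNorm (W1 * W2⁻¹) *
            (1 + 2 * Real.exp (q1 / 2) / q1 *
              (opNorm (Γ1 - W1 * W2⁻¹ * Γ2) +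
                2 * (α - β) * (1 + opNorm (Γ1 - W1 * W2⁻¹ * Γ2))) * Cθ) *
          (steps α (n - 1) / steps β (n - 1)) * u (n - 1) +
        εθ (n - 1) := by
  have hq : 0 < q1 := by rw [hq1]; linarith [hX1.lambdaMin_add_transpose_pos hd]
  obtain ⟨hv1, hv2⟩ := fixedPoint_equations hW2.isUnit_det hX1.isUnit_det hθstar hwstar
  have hstep := sub_fixedPoint_succ (Matrix.nonsing_inv_mul_cancel_right W2 W1 hW2.isUnit_det)
    hv1 hv2 hθrec hwrec
  have hε : 0 ≤ εθ (n - 1) := by rw [hεθ]; positivity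
  exact norm_le_of_step (x := fun k => θ k - θstar) (y := fun k => w k - wstar) hd hstep
    (mprodDecay_of_prod_opNorm_le hd (hβ.trans hβα) hCθ) hq hβ.le hβα.le hα.le huα hupos hudec
    hn hw hε hL

/-- the `θ`-bound \eqref{eqn:thBd} of Lemma `R_n w bound`. -/
theorem stmt17 {d : ℕ} (hd : 0 < d)
    (v1 v2 : E d) (Γ1 Γ2 W1 W2 : Matrix (Fin d) (Fin d) ℝ)
    (hW2 : PosDefNS W2) (hX1 : PosDefNS (Γ1 - W1 * W2⁻¹ * Γ2))
    (α β p δ : ℝ) (hβ : 0 < β) (hβα : β < α) (hα : α < 1)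
    (hp : 1 < p) (hδ0 : 0 < δ) (hδ1 : δ < 1)
    (Lθc Caθ : ℝ) (hLθc : 0 < Lθc) (hCaθ : 0 < Caθ)
    (q1 q2 : ℝ)
    (hq1 : q1 = lambdaMin ((Γ1 - W1 * W2⁻¹ * Γ2) + (Γ1 - W1 * W2⁻¹ * Γ2)ᵀ) / 4)
    (hq2 : q2 = lambdaMin (W2 + W2ᵀ) / 4)
    (Cθ : ℝ)
    (hCθ : ∀ i n : ℕ, i ≤ n →
      ∏ k ∈ Finset.Icc i n, opNorm (1 - steps α k • (Γ1 - W1 * W2⁻¹ * Γ2)) ≤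
        Cθ * Real.exp (-q1 * ∑ k ∈ Finset.Icc i n, steps α k))
    (θ w M1 M2 : ℕ → E d)
    (hθrec : ∀ n : ℕ, θ (n + 1) =
      θ n + steps α n • (v1 - app Γ1 (θ n) - app W1 (w n) + M1 (n + 1)))
    (hwrec : ∀ n : ℕ, w (n + 1) =
      w n + steps β n • (v2 - app Γ2 (θ n) - app W2 (w n) + M2 (n + 1)))
    (θstar wstar : E d)
    (hθstar : θstar = app (Γ1 - W1 * W2⁻¹ * Γ2)⁻¹ (v1 - app (W1 * W2⁻¹) v2))
    (hwstar : wstar = app W2⁻¹ (v2 - app Γ2 θstar))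
    -- the error threshold `ε^{(θ)}`
    (εθ : ℕ → ℝ)
    (hεθ : ∀ k : ℕ, εθ k = Real.sqrt ((d : ℝ) ^ 3 * Lθc * Caθ) *
      (((k : ℝ) + 1) ^ (-(α / 2)) *
        Real.sqrt (Real.log (4 * (d : ℝ) ^ 2 * ((k : ℝ) + 1) ^ p / δ))))
    (n0 n : ℕ) (hn : n0 ≤ n)
    (u : ℕ → ℝ) (hupos : ∀ k, 0 < u k) (hudec : ∀ k, u (k + 1) ≤ u k)
    (huα : AlphaModerateFrom α β q1 u n0) (huβ : BetaModerateFrom α β q2 u n0)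
    (hw : ∀ k : ℕ, n0 ≤ k → k ≤ n → ‖w k - wstar‖ ≤ u k)
    (hL : n0 + 1 ≤ n → ‖Lth Γ1 Γ2 W1 W2 α M1 M2 n0 (n - 1)‖ ≤ εθ (n - 1)) :
    ‖θ n - θstar‖ ≤
      Cθ * max (opNorm (W1 * W2⁻¹)) 1 *
          ((‖θ n0 - θstar‖ + steps α n0 / steps β n0 * ‖w n0 - wstar‖) *
            Real.exp (-q1 * ∑ j ∈ Finset.Icc (n0 + 1) (n - 1), steps α j)) +
        opNorm (W1 * W2⁻¹) *
            (1 + 2 * Real.exp (q1 / 2) / q1 *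
              (opNorm (Γ1 - W1 * W2⁻¹ * Γ2) +
                2 * (α - β) * (1 + opNorm (Γ1 - W1 * W2⁻¹ * Γ2))) * Cθ) *
          (steps α (n - 1) / steps β (n - 1)) * u (n - 1) +
        εθ (n - 1) :=
  stmt17_general hd v1 v2 Γ1 Γ2 W1 W2 hW2 hX1 α β p δ hβ hβα hα Lθc Caθ q1 hq1 Cθ hCθ θ w M1 M2
    hθrec hwrec θstar wstar hθstar hwstar εθ hεθ n0 n hn u hupos hudec huα hw hL
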